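/- Let A ∈ ℂ^{k×n} and S ∈ ℂ^{p×n} satisfy ‖A†A − S†S‖_F ≤ ε, and let z_1,…,z_h be unit vectors in ℂⁿ with h ≤ k. Then |Δ(A; z_1,…,z_h) − Δ(S; z_1,…,z_h)| ≤ h² ε, where Δ(M; z_i) := ‖M‖_F² − ‖M − M Σ_i z_i z_i†‖_F². -/

import Mathlib

open Matrix MeasureTheory
open scoped BigOperators

noncomputable def frobNorm {m n : Type*} [Fintype m] [Fintype n] (M : Matrix m n ℂ) : ℝ :=
  Real.sqrt (∑ i, ∑ j, ‖M i j‖ ^ 2)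

noncomputable def specNorm {m n : Type*} [Fintype m] [Fintype n] [DecidableEq n]
    (M : Matrix m n ℂ) : ℝ :=
  ‖LinearMap.toContinuousLinearMap (Matrix.toEuclideanLin M)‖

noncomputable def vnorm {n : Type*} [Fintype n] (v : n → ℂ) : ℝ :=
  Real.sqrt (∑ i, ‖v i‖ ^ 2)

/-!
`Δ(M; P) = Re tr(GP + PᴴG − PᴴGP)` depends on `M` only through its Gram matrix `G = MᴴM`, and
additively, so `Δ(A) − Δ(S)` is the same expression at `D = AᴴA − SᴴS`. For `P = Σ zᵢzᵢᴴ` it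
equals `Σᵢⱼ wᵢⱼ · zᵢᴴDzⱼ` with `wᵢⱼ = 2δᵢⱼ − zⱼᴴzᵢ`; since the `zᵢ` are unit vectors, `|wᵢⱼ| ≤ 1`
(`wᵢᵢ = 1`), while `|zᵢᴴDzⱼ| ≤ ‖D‖_F ≤ ε` by Cauchy–Schwarz. That gives `h²` terms, each of size
at most `ε`.
-/

open scoped Matrix.Norms.Frobenius

section

variable {m n ι : Type*} [Fintype m] [Fintype n]

lemma frobNorm_eq_norm (M : Matrix m n ℂ) : frobNorm M = ‖M‖ := by
  simp only [frobNorm, frobenius_norm_def, Real.sqrt_eq_rpow, Real.rpow_two]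

lemma vnorm_eq_norm (v : n → ℂ) : vnorm v = ‖WithLp.toLp 2 v‖ := by
  rw [PiLp.norm_eq_of_L2]
  rfl

lemma frobNorm_sq (M : Matrix m n ℂ) : frobNorm M ^ 2 = (Mᴴ * M).trace.re := by
  rw [frobNorm, Real.sq_sqrt (by positivity), trace, Finset.sum_comm]
  simp only [diag_apply, mul_apply, conjTranspose_apply, Complex.re_sum, Complex.star_def,
    Complex.conj_mul', ← Complex.ofReal_pow, Complex.ofReal_re]

lemma norm_star_dotProduct_le (u v : n → ℂ) : ‖star u ⬝ᵥ v‖ ≤ vnorm u * vnorm v := by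
  rw [vnorm_eq_norm, vnorm_eq_norm, dotProduct_comm, ← EuclideanSpace.inner_toLp_toLp]
  exact norm_inner_le_norm _ _

lemma norm_star_dotProduct_mulVec_le (D : Matrix m n ℂ) (u : m → ℂ) (v : n → ℂ) :
    ‖star u ⬝ᵥ D *ᵥ v‖ ≤ vnorm u * (frobNorm D * vnorm v) := by
  have hDv : ‖WithLp.toLp 2 (D *ᵥ v)‖ ≤ frobNorm D * vnorm v := by
    rw [frobNorm_eq_norm, vnorm_eq_norm, ← frobenius_norm_replicateCol (ι := Unit),
      ← frobenius_norm_replicateCol (ι := Unit), replicateCol_mulVec]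
    exact frobenius_norm_mul D _
  calc ‖star u ⬝ᵥ D *ᵥ v‖ ≤ vnorm u * vnorm (D *ᵥ v) := norm_star_dotProduct_le u _
    _ ≤ vnorm u * (frobNorm D * vnorm v) := by
        rw [vnorm_eq_norm (D *ᵥ v)]
        gcongr
        exact Real.sqrt_nonneg _

def gramDelta (G P : Matrix n n ℂ) : ℂ :=
  trace (G * P) + trace (Pᴴ * G) - trace (Pᴴ * G * P)

lemma frobNorm_sq_sub_frobNorm_sub_mul_sq (M : Matrix m n ℂ) (P : Matrix n n ℂ) :
    frobNorm M ^ 2 - frobNorm (M - M * P) ^ 2 = (gramDelta (Mᴴ * M) P).re := by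
  have hgram : (M - M * P)ᴴ * (M - M * P) =
      Mᴴ * M - Mᴴ * M * P - Pᴴ * (Mᴴ * M) + Pᴴ * (Mᴴ * M) * P := by
    simp only [conjTranspose_sub, conjTranspose_mul, Matrix.sub_mul, Matrix.mul_sub,
      Matrix.mul_assoc]
    abel
  rw [frobNorm_sq, frobNorm_sq, hgram, gramDelta]
  simp only [trace_sub, trace_add, Complex.sub_re, Complex.add_re]
  ring

lemma gramDelta_sub (G G' P : Matrix n n ℂ) :
    gramDelta (G - G') P = gramDelta G P - gramDelta G' P := by
  simp only [gramDelta, sub_mul, mul_sub, trace_sub]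
  ring

lemma gramDelta_sum_vecMulVec [Fintype ι] [DecidableEq ι] (D : Matrix n n ℂ) (z : ι → n → ℂ) :
    gramDelta D (∑ i, vecMulVec (z i) (star (z i))) =
      ∑ i, ∑ j, ((if i = j then 2 else 0) - star (z j) ⬝ᵥ z i) * (star (z i) ⬝ᵥ D *ᵥ z j) := by
  set P := ∑ i, vecMulVec (z i) (star (z i))
  have hP : Pᴴ = P := by
    simp only [P, conjTranspose_sum, conjTranspose_vecMulVec, star_star]
  have hDP : trace (D * P) = ∑ i, star (z i) ⬝ᵥ D *ᵥ z i := by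
    simp only [P, Finset.mul_sum, trace_sum, mul_vecMulVec, trace_vecMulVec, dotProduct_comm]
  have hPDP : trace (P * D * P) =
      ∑ i, ∑ j, star (z j) ⬝ᵥ z i * (star (z i) ⬝ᵥ D *ᵥ z j) := by
    have hterm : ∀ a b : n → ℂ, trace (vecMulVec a (star a) * D * vecMulVec b (star b)) =
        star b ⬝ᵥ a * (star a ⬝ᵥ D *ᵥ b) := fun a b => by
      rw [Matrix.mul_assoc, mul_vecMulVec, vecMulVec_mul_vecMulVec, trace_vecMulVec,
        dotProduct_smul, smul_eq_mul, mul_comm, dotProduct_comm a]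
    simp only [P, Finset.sum_mul, Finset.mul_sum, trace_sum, hterm]
    exact Finset.sum_comm
  rw [gramDelta, hP, trace_mul_comm P D, hDP, hPDP]
  simp only [sub_mul, Finset.sum_sub_distrib, ite_mul, zero_mul, Finset.sum_ite_eq,
    Finset.mem_univ, if_true]
  rw [← Finset.mul_sum]
  ring

lemma star_dotProduct_self (v : n → ℂ) : star v ⬝ᵥ v = (vnorm v : ℂ) ^ 2 := by
  rw [vnorm_eq_norm, dotProduct_comm, ← EuclideanSpace.inner_toLp_toLp]
  exact inner_self_eq_norm_sq_to_K _

lemma norm_ite_two_sub_star_dotProduct_le [DecidableEq ι] {z : ι → n → ℂ}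
    (hz : ∀ i, vnorm (z i) = 1) (i j : ι) :
    ‖(if i = j then 2 else 0) - star (z j) ⬝ᵥ z i‖ ≤ 1 := by
  split_ifs with hij
  · subst hij
    rw [star_dotProduct_self, hz]
    norm_num
  · simpa [hz] using norm_star_dotProduct_le (z j) (z i)

lemma norm_sum_sum_mul_le [Fintype ι] {w Q : ι → ι → ℂ} {ε : ℝ} (hw : ∀ i j, ‖w i j‖ ≤ 1)
    (hQ : ∀ i j, ‖Q i j‖ ≤ ε) :
    ‖∑ i, ∑ j, w i j * Q i j‖ ≤ (Fintype.card ι : ℝ) ^ 2 * ε := by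
  rw [← Fintype.sum_prod_type']
  calc ‖∑ x : ι × ι, w x.1 x.2 * Q x.1 x.2‖ ≤ ∑ _x : ι × ι, ε :=
        norm_sum_le_of_le _ fun x _ => by
          rw [norm_mul]
          exact (mul_le_of_le_one_left (norm_nonneg _) (hw _ _)).trans (hQ _ _)
    _ = (Fintype.card ι : ℝ) ^ 2 * ε := by
        simp [Fintype.card_prod, sq]

end

theorem stmt6_general {k n p h : ℕ} (A : Matrix (Fin k) (Fin n) ℂ)
    (S : Matrix (Fin p) (Fin n) ℂ) (ε : ℝ)
    (hAS : frobNorm (Aᴴ * A - Sᴴ * S) ≤ ε)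
    (z : Fin h → Fin n → ℂ) (hz : ∀ i, vnorm (z i) = 1) :
    |(frobNorm A ^ 2 -
        frobNorm (A - A * ∑ i, Matrix.vecMulVec (z i) (star (z i))) ^ 2) -
      (frobNorm S ^ 2 -
        frobNorm (S - S * ∑ i, Matrix.vecMulVec (z i) (star (z i))) ^ 2)| ≤
      (h : ℝ) ^ 2 * ε := by
  rw [frobNorm_sq_sub_frobNorm_sub_mul_sq, frobNorm_sq_sub_frobNorm_sub_mul_sq, ← Complex.sub_re,
    ← gramDelta_sub, gramDelta_sum_vecMulVec]
  have hQ (i j : Fin h) : ‖star (z i) ⬝ᵥ (Aᴴ * A - Sᴴ * S) *ᵥ z j‖ ≤ ε := by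
    have hCS := norm_star_dotProduct_mulVec_le (Aᴴ * A - Sᴴ * S) (z i) (z j)
    rw [hz, hz, one_mul, mul_one] at hCS
    exact hCS.trans hAS
  calc _ ≤ ‖_‖ := Complex.abs_re_le_norm _
    _ ≤ (Fintype.card (Fin h) : ℝ) ^ 2 * ε :=
        norm_sum_sum_mul_le (norm_ite_two_sub_star_dotProduct_le hz) hQ
    _ = (h : ℝ) ^ 2 * ε := by rw [Fintype.card_fin]

/-- `|Δ(A; z) − Δ(S; z)| ≤ h²ε` when `‖A†A − S†S‖_F ≤ ε`, for `h ≤ k` unit vectors. -/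
theorem stmt6 {k n p h : ℕ} (hhk : h ≤ k) (A : Matrix (Fin k) (Fin n) ℂ)
    (S : Matrix (Fin p) (Fin n) ℂ) (ε : ℝ)
    (hAS : frobNorm (Aᴴ * A - Sᴴ * S) ≤ ε)
    (z : Fin h → Fin n → ℂ) (hz : ∀ i, vnorm (z i) = 1) :
    |(frobNorm A ^ 2 -
        frobNorm (A - A * ∑ i, Matrix.vecMulVec (z i) (star (z i))) ^ 2) -
      (frobNorm S ^ 2 -
        frobNorm (S - S * ∑ i, Matrix.vecMulVec (z i) (star (z i))) ^ 2)| ≤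
      (h : ℝ) ^ 2 * ε :=
  stmt6_general A S ε hAS z hz
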